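/- arXiv:1701.01420 — 2 statements merged into one kernel-verified Lean document; each statement's English description precedes it below -/
import Mathlib

section
/- Let γ be a marked graph with half-edges and 𝒱 ⊆ Ver. Then |F°_γ(𝒱)| ≤ |F†_γ(𝒱)| + |S ∩ ε⁻¹(𝒱)|; equivalently, the number of flags in F°_γ(𝒱) ∖ F†_γ(𝒱) is at most the number of marked labels carried by the vertices of 𝒱. -/
/-- The set of edges of a graph with half-edges: unordered pairs `{f, ϑ f}`. -/
def edgeSet {F : Type*} (ϑ : F → F) : Set (Set F) :=
  {e | ∃ f, e = {f, ϑ f}}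

/-- The edges both of whose flags have ε-image in `S`. -/
def edgesIn {V F : Type*} (ε : F → V) (ϑ : F → F) (S : Set V) : Set (Set F) :=
  {e | ∃ f, e = {f, ϑ f} ∧ ε f ∈ S ∧ ε (ϑ f) ∈ S}

/-- One-step adjacency in the graph: `v` and `v'` are the two endpoints of an edge. -/
def Step {V F : Type*} (ε : F → V) (ϑ : F → F) (v v' : V) : Prop :=
  ∃ f, ε f = v ∧ ε (ϑ f) = v'

/-- The graph is connected: any two distinct vertices are joined by a chain of edges. -/
def IsConnectedGraph {V F : Type*} (ε : F → V) (ϑ : F → F) : Prop :=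
  ∀ v v' : V, v ≠ v' → Relation.ReflTransGen (Step ε ϑ) v v'

/-- One-step adjacency within the induced subgraph on the vertex subset `S`. -/
def StepIn {V F : Type*} (ε : F → V) (ϑ : F → F) (S : Set V) (v v' : V) : Prop :=
  v ∈ S ∧ v' ∈ S ∧ ∃ f, ε f = v ∧ ε (ϑ f) = v'

/-- The connected component of `v` in the induced subgraph on `S`. -/
def component {V F : Type*} (ε : F → V) (ϑ : F → F) (S : Set V) (v : V) : Set V :=
  {w | Relation.ReflTransGen (StepIn ε ϑ S) v w}

/-- `π₀(γ,S)`: the set of connected components of the induced subgraph on `S`. -/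
def pi0 {V F : Type*} (ε : F → V) (ϑ : F → F) (S : Set V) : Set (Set V) :=
  {C | ∃ v ∈ S, C = component ε ϑ S v}

/-- The crossing edges of a subset `C` of vertices: edges with exactly one flag
having ε-image in `C`. -/
def crossingEdges {V F : Type*} (ε : F → V) (ϑ : F → F) (C : Set V) : Set (Set F) :=
  {e | ∃ f, e = {f, ϑ f} ∧ ε f ∉ C ∧ ε (ϑ f) ∈ C}

/-- One-step adjacency in the graph obtained by deleting the two flags `f₀`, `ϑ f₀`. -/
def StepAvoid {V F : Type*} (ε : F → V) (ϑ : F → F) (f₀ : F) (v v' : V) : Prop :=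
  ∃ g, g ≠ f₀ ∧ g ≠ ϑ f₀ ∧ ε g = v ∧ ε (ϑ g) = v'

/-- The flag `f₀` disconnects `C` from the rest of the graph: after deleting the flags
`f₀` and `ϑ f₀`, there is no chain of edges from a vertex of `C` to a vertex outside `C`. -/
def Disconnects {V F : Type*} (ε : F → V) (ϑ : F → F) (C : Set V) (f₀ : F) : Prop :=
  ∀ v ∈ C, ∀ v' ∉ C, ¬ Relation.ReflTransGen (StepAvoid ε ϑ f₀) v v'

/-- `F°_γ(S)`: the flags `f` with `ε f ∉ S` that disconnect from the rest of the graph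
the connected component of the induced subgraph on `S` containing `ε (ϑ f)`. -/
def Fcirc {V F : Type*} (ε : F → V) (ϑ : F → F) (S : Set V) : Set F :=
  {f | ε f ∉ S ∧ ε (ϑ f) ∈ S ∧ Disconnects ε ϑ (component ε ϑ S (ε (ϑ f))) f}

/-- `F†_γ(S)`: the flags of `F°_γ(S)` whose associated component carries no marked label. -/
def Fdagger {V F L : Type*} (ε : F → V) (ϑ : F → F) (εS : L → V) (S : Set V) : Set F :=
  {f | f ∈ Fcirc ε ϑ S ∧ ∀ s : L, εS s ∉ component ε ϑ S (ε (ϑ f))}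

/-!
Distinct flags of `F°_γ(𝒱)` point into distinct components of `γ_𝒱`: if `f ≠ f'` pointed into
the same component `C`, the edge of `f'` would survive the deletion of `f` and still join `C`
to its outside. A flag of `F°_γ(𝒱) ∖ F†_γ(𝒱)` points into a component carrying a marked label,
which lies in `𝒱`; choosing one such label per flag is therefore injective.
-/

section Components

variable {V F : Type*} (ε : F → V) (ϑ : F → F) (S : Set V)

lemma component_subset {v : V} (hv : v ∈ S) : component ε ϑ S v ⊆ S := by
  intro w hw
  induction hw with
  | refl => exact hv
  | tail _ hstep _ => exact hstep.2.1

variable {ε ϑ S}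

lemma StepIn.symm (hinv : Function.Involutive ϑ) {v w : V} (h : StepIn ε ϑ S v w) :
    StepIn ε ϑ S w v := by
  obtain ⟨hv, hw, f, rfl, rfl⟩ := h
  exact ⟨hw, hv, ϑ f, rfl, by rw [hinv f]⟩

lemma mem_component_comm (hinv : Function.Involutive ϑ) {v w : V}
    (h : w ∈ component ε ϑ S v) : v ∈ component ε ϑ S w :=
  Relation.ReflTransGen.mono (fun _ _ => StepIn.symm hinv) _ _ (Relation.ReflTransGen.swap _ _ h)

lemma component_eq_of_mem_of_mem (hinv : Function.Involutive ϑ) {v v' x : V}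
    (hx : x ∈ component ε ϑ S v) (hx' : x ∈ component ε ϑ S v') :
    component ε ϑ S v = component ε ϑ S v' := by
  ext w
  constructor
  · exact fun hw => hx'.trans ((mem_component_comm hinv hx).trans hw)
  · exact fun hw => hx.trans ((mem_component_comm hinv hx').trans hw)

end Components

section Flags

variable {V F : Type*} {ε : F → V} {ϑ : F → F} {S : Set V}

lemma eq_of_mem_Fcirc_of_component_eq (hinv : Function.Involutive ϑ) {f f' : F}
    (hf : f ∈ Fcirc ε ϑ S) (hf' : f' ∈ Fcirc ε ϑ S)
    (hC : component ε ϑ S (ε (ϑ f)) = component ε ϑ S (ε (ϑ f'))) : f = f' := by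
  by_contra hne
  obtain ⟨hfS, hϑfS, hdisc⟩ := hf
  obtain ⟨hf'S, hϑf'S, -⟩ := hf'
  have hin : ε (ϑ f') ∈ component ε ϑ S (ε (ϑ f)) := hC ▸ Relation.ReflTransGen.refl
  have hout : ε f' ∉ component ε ϑ S (ε (ϑ f)) :=
    fun h => hf'S (component_subset ε ϑ S hϑfS h)
  have hstep : StepAvoid ε ϑ f (ε (ϑ f')) (ε f') :=
    ⟨ϑ f', fun h => hfS (h ▸ hϑf'S), fun h => hne (hinv.injective h).symm, rfl, by rw [hinv f']⟩
  exact hdisc _ hin _ hout (.single hstep)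

lemma exists_label_mem_component {L : Type*} {εS : L → V} {f : F}
    (hf : f ∈ Fcirc ε ϑ S \ Fdagger ε ϑ εS S) :
    ∃ s, εS s ∈ S ∧ εS s ∈ component ε ϑ S (ε (ϑ f)) := by
  obtain ⟨hcirc, hnot⟩ := hf
  obtain ⟨s, hs⟩ : ∃ s, εS s ∈ component ε ϑ S (ε (ϑ f)) := by
    by_contra! h
    exact hnot ⟨hcirc, h⟩
  exact ⟨s, component_subset ε ϑ S hcirc.2.1 hs, hs⟩

lemma ncard_Fcirc_diff_Fdagger_le {L : Type*} [Finite L] (εS : L → V)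
    (hinv : Function.Involutive ϑ) :
    (Fcirc ε ϑ S \ Fdagger ε ϑ εS S).ncard ≤ {s : L | εS s ∈ S}.ncard := by
  choose label hlabel using fun f : ↥(Fcirc ε ϑ S \ Fdagger ε ϑ εS S) =>
    exists_label_mem_component f.2
  rw [← Nat.card_coe_set_eq, ← Nat.card_coe_set_eq]
  refine Nat.card_le_card_of_injective (fun f => ⟨label f, (hlabel f).1⟩) ?_
  intro f f' heq
  have hsame : label f = label f' := congrArg Subtype.val heq
  refine Subtype.ext (eq_of_mem_Fcirc_of_component_eq hinv f.2.1 f'.2.1 ?_)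
  exact component_eq_of_mem_of_mem hinv (hlabel f).2 (hsame ▸ (hlabel f').2)

end Flags

theorem stmt4_general {V F L : Type*} [Fintype F] [Fintype L]
    (ε : F → V) (ϑ : F → F) (εS : L → V)
    (hinv : Function.Involutive ϑ)
    (𝒱 : Set V) :
    (Fcirc ε ϑ 𝒱).ncard ≤ (Fdagger ε ϑ εS 𝒱).ncard + {s : L | εS s ∈ 𝒱}.ncard := by
  have hsub : Fdagger ε ϑ εS 𝒱 ⊆ Fcirc ε ϑ 𝒱 := fun _ hf => hf.1
  rw [← Set.ncard_sdiff_add_ncard_of_subset hsub, add_comm]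
  exact Nat.add_le_add_left (ncard_Fcirc_diff_Fdagger_le εS hinv) _

/-- For a marked graph with half-edges and a vertex subset `𝒱`,
`|F°_γ(𝒱)| ≤ |F†_γ(𝒱)| + |S ∩ ε⁻¹(𝒱)|`. -/
theorem stmt4 {V F L : Type*} [Fintype V] [Fintype F] [Fintype L]
    (ε : F → V) (ϑ : F → F) (εS : L → V)
    (hinv : Function.Involutive ϑ) (hfpf : ∀ f, ϑ f ≠ f)
    (𝒱 : Set V) :
    (Fcirc ε ϑ 𝒱).ncard ≤ (Fdagger ε ϑ εS 𝒱).ncard + {s : L | εS s ∈ 𝒱}.ncard :=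
  stmt4_general ε ϑ εS hinv 𝒱
end

section
/- Let γ be a graph with half-edges and S ⊆ Ver, and define the loop number ℓ(γ,S) := |E_γ(S)| − |S| + |π₀(γ,S)| (as an integer). Then ℓ(γ,S) ≥ 0 and ℓ(γ,S) ≤ |E(γ)| − |Ver| + |π₀(γ,Ver)|; in particular, if γ is connected then ℓ(γ,S) ≤ |E(γ)| − |Ver| + 1. -/
/-! Adding a vertex `v ∉ S` to `S` contributes `-1` to the loop number `ℓ`, but each component
of `S` joined to `v` by an edge contributes a new edge, and all these components merge with `v`
into a single new component while the others survive unchanged. Hence `ℓ` is monotone in `S`,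
and the bounds are `ℓ(γ,∅) = 0` and the value of `ℓ` at `S = Ver`. -/

section LoopNumber

variable {V F : Type*} {ε : F → V} {ϑ : F → F} {S : Set V} {u v : V}

theorem stepIn_symm (hinv : Function.Involutive ϑ) : Std.Symm (StepIn ε ϑ S) where
  symm := by
    rintro a b ⟨ha, hb, f, rfl, rfl⟩
    exact ⟨hb, ha, ϑ f, rfl, by rw [hinv f]⟩

theorem reflTransGen_stepIn_symm (hinv : Function.Involutive ϑ)
    (h : Relation.ReflTransGen (StepIn ε ϑ S) u v) :
    Relation.ReflTransGen (StepIn ε ϑ S) v u :=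
  have := stepIn_symm (ε := ε) (S := S) hinv
  Std.Symm.symm _ _ h

theorem mem_of_reflTransGen_stepIn (hu : u ∈ S) (h : Relation.ReflTransGen (StepIn ε ϑ S) u v) :
    v ∈ S := by
  induction h with
  | refl => exact hu
  | tail _ hstep _ => exact hstep.2.1

theorem component_eq_of_reflTransGen (hinv : Function.Involutive ϑ)
    (h : Relation.ReflTransGen (StepIn ε ϑ S) u v) :
    component ε ϑ S u = component ε ϑ S v := by
  ext w
  exact ⟨(reflTransGen_stepIn_symm hinv h).trans, h.trans⟩

theorem subset_of_mem_pi0 {C : Set V} (hC : C ∈ pi0 ε ϑ S) : C ⊆ S := by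
  obtain ⟨a, ha, rfl⟩ := hC
  exact fun _ => mem_of_reflTransGen_stepIn ha

theorem eq_of_mem_pi0_of_mem (hinv : Function.Involutive ϑ) {C C' : Set V}
    (hC : C ∈ pi0 ε ϑ S) (hC' : C' ∈ pi0 ε ϑ S) {x : V} (hx : x ∈ C) (hx' : x ∈ C') :
    C = C' := by
  obtain ⟨a, _, rfl⟩ := hC
  obtain ⟨b, _, rfl⟩ := hC'
  rw [component_eq_of_reflTransGen hinv hx, component_eq_of_reflTransGen hinv hx']

theorem mem_of_mem_edgesIn {e : Set F} {f : F} (he : e ∈ edgesIn ε ϑ S) (hf : f ∈ e) :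
    ε f ∈ S := by
  obtain ⟨g, rfl, hg, hϑg⟩ := he
  rcases hf with rfl | rfl
  exacts [hg, hϑg]

def adjComponents (ε : F → V) (ϑ : F → F) (S : Set V) (v : V) : Set (Set V) :=
  {C | C ∈ pi0 ε ϑ S ∧ ∃ f, ε f ∈ C ∧ ε (ϑ f) = v}

theorem component_insert_eq_of_notMem_adjComponents (hu : u ∈ S)
    (hadj : component ε ϑ S u ∉ adjComponents ε ϑ S v) :
    component ε ϑ (insert v S) u = component ε ϑ S u := by
  refine subset_antisymm (fun w hw => ?_) fun w =>
    Relation.ReflTransGen.mono (fun a b ⟨ha, hb, hab⟩ => ⟨.inr ha, .inr hb, hab⟩) u w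
  induction hw with
  | refl => exact .refl
  | @tail b w _ hstep ih =>
    obtain ⟨-, hw, f, rfl, rfl⟩ := hstep
    have hwS : ε (ϑ f) ∈ S := hw.resolve_left fun hv => hadj ⟨⟨u, hu, rfl⟩, f, ih, hv⟩
    exact ih.tail ⟨mem_of_reflTransGen_stepIn hu ih, hwS, f, rfl, rfl⟩

theorem ncard_edgesIn_add_ncard_adjComponents_le [Finite F] (hinv : Function.Involutive ϑ)
    (hv : v ∉ S) :
    (edgesIn ε ϑ S).ncard + (adjComponents ε ϑ S v).ncard ≤
      (edgesIn ε ϑ (insert v S)).ncard := by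
  have hsub : edgesIn ε ϑ S ⊆ edgesIn ε ϑ (insert v S) := fun _ ⟨f, he, hf, hϑf⟩ =>
    ⟨f, he, .inr hf, .inr hϑf⟩
  rcases (adjComponents ε ϑ S v).eq_empty_or_nonempty with hempty | ⟨_, -, f₀, -⟩
  · rw [hempty, Set.ncard_empty, add_zero]
    exact Set.ncard_le_ncard hsub
  have : Nonempty F := ⟨f₀⟩
  have hadj : ∀ C ∈ adjComponents ε ϑ S v, ∃ f, ε f ∈ C ∧ ε (ϑ f) = v :=
    fun _ hC => hC.2
  choose! flag hflag hϑflag using hadj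
  have hflagS : ∀ C ∈ adjComponents ε ϑ S v, ε (flag C) ∈ S := fun C hC =>
    subset_of_mem_pi0 hC.1 (hflag C hC)
  have hmaps : ∀ C ∈ adjComponents ε ϑ S v,
      {flag C, ϑ (flag C)} ∈ edgesIn ε ϑ (insert v S) \ edgesIn ε ϑ S := fun C hC =>
    ⟨⟨flag C, rfl, .inr (hflagS C hC), by rw [hϑflag C hC]; exact .inl rfl⟩,
      fun he => hv (hϑflag C hC ▸ mem_of_mem_edgesIn he (.inr rfl))⟩
  have hinj : Set.InjOn (fun C => ({flag C, ϑ (flag C)} : Set F)) (adjComponents ε ϑ S v) := by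
    intro C hC C' hC' he
    have hmem : flag C' ∈ ({flag C, ϑ (flag C)} : Set F) := by
      simp only at he
      exact he ▸ .inl rfl
    rcases hmem with hfl | hfl
    · exact eq_of_mem_pi0_of_mem hinv hC.1 hC'.1 (hflag C hC) (hfl ▸ hflag C' hC')
    · exact absurd (hϑflag C hC ▸ hfl ▸ hflagS C' hC') hv
  calc (edgesIn ε ϑ S).ncard + (adjComponents ε ϑ S v).ncard
      ≤ (edgesIn ε ϑ S).ncard + (edgesIn ε ϑ (insert v S) \ edgesIn ε ϑ S).ncard :=
        Nat.add_le_add_left (Set.ncard_le_ncard_of_injOn _ hmaps hinj) _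
    _ = (edgesIn ε ϑ (insert v S)).ncard := by
        rw [add_comm, Set.ncard_sdiff_add_ncard_of_subset hsub]

theorem ncard_pi0_add_one_le [Finite V] (hv : v ∉ S) :
    (pi0 ε ϑ S).ncard + 1 ≤
      (pi0 ε ϑ (insert v S)).ncard + (adjComponents ε ϑ S v).ncard := by
  have hsplit :=
    Set.ncard_sdiff_add_ncard_of_subset fun C (hC : C ∈ adjComponents ε ϑ S v) => hC.1
  have hnew : component ε ϑ (insert v S) v ∉ pi0 ε ϑ S \ adjComponents ε ϑ S v :=
    fun hC => hv (subset_of_mem_pi0 hC.1 Relation.ReflTransGen.refl)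
  have hsub : insert (component ε ϑ (insert v S) v) (pi0 ε ϑ S \ adjComponents ε ϑ S v) ⊆
      pi0 ε ϑ (insert v S) := by
    rintro C (rfl | ⟨⟨u, hu, rfl⟩, hadj⟩)
    · exact ⟨v, .inl rfl, rfl⟩
    · exact ⟨u, .inr hu, (component_insert_eq_of_notMem_adjComponents hu hadj).symm⟩
  have := Set.ncard_le_ncard hsub
  rw [Set.ncard_insert_of_notMem hnew] at this
  omega

noncomputable def loopNumber (ε : F → V) (ϑ : F → F) (S : Set V) : ℤ :=
  (edgesIn ε ϑ S).ncard - S.ncard + (pi0 ε ϑ S).ncard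

theorem loopNumber_le_loopNumber_insert [Finite V] [Finite F] (hinv : Function.Involutive ϑ)
    (S : Set V) (v : V) : loopNumber ε ϑ S ≤ loopNumber ε ϑ (insert v S) := by
  by_cases hv : v ∈ S
  · rw [Set.insert_eq_of_mem hv]
  have hedges := ncard_edgesIn_add_ncard_adjComponents_le (ε := ε) hinv hv
  have hpi0 := ncard_pi0_add_one_le (ε := ε) (ϑ := ϑ) hv
  have hcard := Set.ncard_insert_of_notMem hv
  unfold loopNumber
  omega

theorem loopNumber_mono [Finite V] [Finite F] (hinv : Function.Involutive ϑ) :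
    Monotone (loopNumber ε ϑ) := by
  intro A B hAB
  rw [← Set.union_sdiff_cancel hAB]
  induction B \ A, (B \ A).toFinite using Set.Finite.induction_on with
  | empty => rw [Set.union_empty]
  | @insert v D _ _ ih =>
    rw [Set.union_insert]
    exact ih.trans (loopNumber_le_loopNumber_insert hinv _ v)

theorem loopNumber_empty : loopNumber ε ϑ ∅ = 0 := by
  have hedges : edgesIn ε ϑ (∅ : Set V) = ∅ := by ext; simp [edgesIn]
  have hpi0 : pi0 ε ϑ (∅ : Set V) = ∅ := by ext; simp [pi0]
  simp [loopNumber, hedges, hpi0]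

theorem loopNumber_univ :
    loopNumber ε ϑ Set.univ =
      ((edgeSet ϑ).ncard : ℤ) - Nat.card V + (pi0 ε ϑ Set.univ).ncard := by
  have hedges : edgesIn ε ϑ Set.univ = edgeSet ϑ := by ext; simp [edgesIn, edgeSet]
  rw [loopNumber, hedges, Set.ncard_univ]

theorem ncard_pi0_univ_le_one [Finite V] (hinv : Function.Involutive ϑ)
    (hconn : IsConnectedGraph ε ϑ) : (pi0 ε ϑ Set.univ).ncard ≤ 1 := by
  rw [Set.ncard_le_one]
  rintro _ ⟨a, -, rfl⟩ _ ⟨b, -, rfl⟩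
  rcases eq_or_ne a b with rfl | hab
  · rfl
  exact component_eq_of_reflTransGen hinv <| Relation.ReflTransGen.mono
    (fun x y ⟨f, hx, hy⟩ => ⟨trivial, trivial, f, hx, hy⟩) _ _ (hconn a b hab)

end LoopNumber

theorem stmt7_general {V F : Type*} [Fintype V] [Fintype F]
    (ε : F → V) (ϑ : F → F) (hinv : Function.Involutive ϑ)
    (S : Set V) :
    0 ≤ ((edgesIn ε ϑ S).ncard : ℤ) - S.ncard + (pi0 ε ϑ S).ncard ∧
    ((edgesIn ε ϑ S).ncard : ℤ) - S.ncard + (pi0 ε ϑ S).ncard ≤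
      ((edgeSet ϑ).ncard : ℤ) - (Fintype.card V : ℤ) + (pi0 ε ϑ (Set.univ : Set V)).ncard ∧
    (IsConnectedGraph ε ϑ →
      ((edgesIn ε ϑ S).ncard : ℤ) - S.ncard + (pi0 ε ϑ S).ncard ≤
        ((edgeSet ϑ).ncard : ℤ) - (Fintype.card V : ℤ) + 1) := by
  have hlower : 0 ≤ loopNumber ε ϑ S :=
    loopNumber_empty (ε := ε) (ϑ := ϑ) ▸ loopNumber_mono hinv (Set.empty_subset S)
  have hupper := loopNumber_mono (ε := ε) hinv (Set.subset_univ S)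
  rw [loopNumber_univ, Nat.card_eq_fintype_card] at hupper
  exact ⟨hlower, hupper, fun hconn => hupper.trans (by
    simpa using ncard_pi0_univ_le_one hinv hconn)⟩

/-- For a graph with half-edges and a vertex subset `S`, the loop number
`ℓ(γ,S) = |E_γ(S)| − |S| + |π₀(γ,S)|` satisfies `0 ≤ ℓ(γ,S)` and
`ℓ(γ,S) ≤ |E(γ)| − |Ver| + |π₀(γ,Ver)|`; in particular, if the graph is connected then
`ℓ(γ,S) ≤ |E(γ)| − |Ver| + 1`. -/
theorem stmt7 {V F : Type*} [Fintype V] [Fintype F]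
    (ε : F → V) (ϑ : F → F) (hinv : Function.Involutive ϑ) (hfpf : ∀ f, ϑ f ≠ f)
    (S : Set V) :
    0 ≤ ((edgesIn ε ϑ S).ncard : ℤ) - S.ncard + (pi0 ε ϑ S).ncard ∧
    ((edgesIn ε ϑ S).ncard : ℤ) - S.ncard + (pi0 ε ϑ S).ncard ≤
      ((edgeSet ϑ).ncard : ℤ) - (Fintype.card V : ℤ) + (pi0 ε ϑ (Set.univ : Set V)).ncard ∧
    (IsConnectedGraph ε ϑ →
      ((edgesIn ε ϑ S).ncard : ℤ) - S.ncard + (pi0 ε ϑ S).ncard ≤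
        ((edgeSet ϑ).ncard : ℤ) - (Fintype.card V : ℤ) + 1) :=
  stmt7_general ε ϑ hinv S
end
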